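/- arXiv:2110.10606 — 8 statements merged into one kernel-verified Lean document; each statement's English description precedes it below -/
import Mathlib

section
/- For every real d ≥ 3 and every real k ≥ 1, the function y ↦ (k + 1 − y)·(d^y − 1)/(d − 1) is strictly increasing on the closed interval [0, k]. -/
/-! For `y < k` we have `k + 1 - y > 1`, so once `log d ≥ 1` the derivative
`(k + 1 - y) d^y log d - (d^y - 1)` of the numerator exceeds `d^y - (d^y - 1) = 1`;
`d ≥ 3 > e` gives `log d ≥ 1`. -/

open Real Set

theorem hasDerivAt_sub_mul_rpow_sub_one {d : ℝ} (hd : 0 < d) (c x : ℝ) :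
    HasDerivAt (fun y : ℝ => (c - y) * (d ^ y - 1))
      (-(d ^ x - 1) + (c - x) * (d ^ x * log d)) x := by
  have hlin : HasDerivAt (fun y : ℝ => c - y) (-1) x := by
    simpa using (hasDerivAt_id x).const_sub c
  have hexp : HasDerivAt (fun y : ℝ => d ^ y - 1) (d ^ x * log d) x :=
    (hasStrictDerivAt_const_rpow hd x).hasDerivAt.sub_const 1
  exact (hlin.mul hexp).congr_deriv (by ring)

theorem strictMonoOn_sub_mul_rpow_sub_one {d : ℝ} (hd : exp 1 ≤ d) (k : ℝ) :
    StrictMonoOn (fun y : ℝ => (k + 1 - y) * (d ^ y - 1)) (Iic k) := by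
  have hd0 : 0 < d := (exp_pos 1).trans_le hd
  have hlog : 1 ≤ log d := by rwa [le_log_iff_exp_le hd0]
  have hderiv := hasDerivAt_sub_mul_rpow_sub_one hd0 (k + 1)
  refine strictMonoOn_of_hasDerivWithinAt_pos (convex_Iic k)
    (fun x _ => (hderiv x).continuousAt.continuousWithinAt)
    (fun x _ => (hderiv x).hasDerivWithinAt) fun x hx => ?_
  rw [interior_Iic] at hx
  have hpow : 0 < d ^ x := rpow_pos_of_pos hd0 x
  have hfactor : 1 < (k + 1 - x) * log d := by nlinarith [mem_Iio.mp hx]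
  nlinarith

theorem stmt_4_general (d k : ℝ) (hd : 3 ≤ d) :
    StrictMonoOn (fun y : ℝ => (k + 1 - y) * (d ^ y - 1) / (d - 1)) (Set.Icc 0 k) := by
  have he : exp 1 ≤ d := by linarith [exp_one_lt_d9]
  have hnum := (strictMonoOn_sub_mul_rpow_sub_one he k).mono (Icc_subset_Iic_self (a := 0))
  exact fun x hx y hy hxy => div_lt_div_of_pos_right (hnum hx hy hxy) (by linarith)

/-- Claim 1 of the paper: for real `d ≥ 3` and `k ≥ 1`, the function
`y ↦ (k + 1 − y)·(d^y − 1)/(d − 1)` is strictly increasing on `[0, k]`. -/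
theorem stmt_4 (d k : ℝ) (hd : 3 ≤ d) (hk : 1 ≤ k) :
    StrictMonoOn (fun y : ℝ => (k + 1 - y) * (d ^ y - 1) / (d - 1)) (Set.Icc 0 k) :=
  stmt_4_general d k hd
end

section
/- For all integers d ≥ 3 and k ≥ 1 and every real y with 0 ≤ y ≤ k, one has (k + 1 − y)·(d^{⌊y⌋} − 1)/(d − 1) ≤ (d^k − 1)/(d − 1), where ⌊y⌋ denotes the floor of y. -/
/-!
Write `m = ⌊y⌋₊ ≤ k`. Since `k + 1 - y ≤ k - m + 1` and, by Bernoulli's inequality,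
`k - m + 1 ≤ d ^ (k - m)`, the numerator is at most
`d ^ (k - m) * (d ^ m - 1) = d ^ k - d ^ (k - m) ≤ d ^ k - 1`.
-/

section OrderedRing

variable {R : Type*} [CommRing R] [LinearOrder R] [IsStrictOrderedRing R]

theorem natCast_add_one_le_pow {x : R} (hx : 2 ≤ x) (n : ℕ) : (n : R) + 1 ≤ x ^ n := by
  have h := one_add_mul_le_pow (a := x - 1) (by linarith) n
  rw [add_sub_cancel] at h
  nlinarith [(Nat.cast_nonneg n : (0 : R) ≤ n)]

theorem natCast_sub_add_one_mul_pow_sub_one_le {x : R} (hx : 2 ≤ x) {m k : ℕ} (hmk : m ≤ k) :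
    ((k : R) - m + 1) * (x ^ m - 1) ≤ x ^ k - 1 := by
  obtain ⟨j, rfl⟩ := Nat.exists_eq_add_of_le hmk
  have hj : (j : R) + 1 ≤ x ^ j := natCast_add_one_le_pow hx j
  have hxm : 1 ≤ x ^ m := one_le_pow₀ (by linarith)
  have hxj : 1 ≤ x ^ j := one_le_pow₀ (by linarith)
  calc ((↑(m + j) : R) - m + 1) * (x ^ m - 1) = ((j : R) + 1) * (x ^ m - 1) := by
          push_cast; ring
    _ ≤ x ^ j * (x ^ m - 1) := mul_le_mul_of_nonneg_right hj (by linarith)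
    _ = x ^ (m + j) - x ^ j := by ring
    _ ≤ x ^ (m + j) - 1 := by linarith

theorem natCast_add_one_sub_mul_pow_floor_sub_one_le [FloorSemiring R] {x y : R} (hx : 2 ≤ x)
    {k : ℕ} (hy0 : 0 ≤ y) (hyk : y ≤ k) :
    ((k : R) + 1 - y) * (x ^ ⌊y⌋₊ - 1) ≤ x ^ k - 1 := by
  have hfloor : (⌊y⌋₊ : R) ≤ y := Nat.floor_le hy0
  have hpow : 1 ≤ x ^ ⌊y⌋₊ := one_le_pow₀ (by linarith)
  calc ((k : R) + 1 - y) * (x ^ ⌊y⌋₊ - 1)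
      ≤ ((k : R) - ⌊y⌋₊ + 1) * (x ^ ⌊y⌋₊ - 1) :=
        mul_le_mul_of_nonneg_right (by linarith) (by linarith)
    _ ≤ x ^ k - 1 := natCast_sub_add_one_mul_pow_sub_one_le hx (Nat.floor_le_of_le hyk)

end OrderedRing

theorem stmt_5_general (d k : ℕ) (hd : 3 ≤ d) (y : ℝ) (hy0 : 0 ≤ y) (hyk : y ≤ (k : ℝ)) :
    ((k : ℝ) + 1 - y) * ((d : ℝ) ^ ⌊y⌋ - 1) / ((d : ℝ) - 1) ≤ ((d : ℝ) ^ k - 1) / ((d : ℝ) - 1) := by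
  have hd' : (3 : ℝ) ≤ d := by exact_mod_cast hd
  have hpow : (d : ℝ) ^ ⌊y⌋ = (d : ℝ) ^ ⌊y⌋₊ := by
    rw [← Int.natCast_floor_eq_floor hy0, zpow_natCast]
  rw [hpow]
  exact div_le_div_of_nonneg_right
    (natCast_add_one_sub_mul_pow_floor_sub_one_le (by linarith) hy0 hyk) (by linarith)

/-- Consequence of Claim 1 used in Lemma 2: for integers `d ≥ 3`, `k ≥ 1` and real
`0 ≤ y ≤ k`, one has `(k + 1 − y)·(d^⌊y⌋ − 1)/(d − 1) ≤ (d^k − 1)/(d − 1)`. -/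
theorem stmt_5 (d k : ℕ) (hd : 3 ≤ d) (hk : 1 ≤ k) (y : ℝ) (hy0 : 0 ≤ y) (hyk : y ≤ (k : ℝ)) :
    ((k : ℝ) + 1 - y) * ((d : ℝ) ^ ⌊y⌋ - 1) / ((d : ℝ) - 1) ≤ ((d : ℝ) ^ k - 1) / ((d : ℝ) - 1) :=
  stmt_5_general d k hd y hy0 hyk
end

section
/- Let d ≥ 3 and k ≥ 1 be integers and set G(k) = (d^k − 1)/(d − 1). Let x_min > 0 and let x, c, S, T, π₀ be reals with 0 < x ≤ (k+1)·x_min, x_min ≤ c ≤ x, 0 ≤ S ≤ (d − 1)·G(k)·x_min, T ≥ 0, and π₀ ≥ d·G(k) + 2k − 1. Then the function t ↦ (x + S + c·t)/(π₀ + T + t) is monotone nondecreasing on the interval [0, ∞). -/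
/-- Number of nodes in the first `m` levels of a complete `d`-ary tree. -/
noncomputable def G (d m : ℕ) : ℝ := ((d : ℝ) ^ m - 1) / ((d : ℝ) - 1)

/-- Analytic core of Lemma 2: the utility `t ↦ (x + S + c·t)/(π₀ + T + t)` of the root
is monotone nondecreasing in the number `t ≥ 0` of players referred through the child. -/
theorem stmt_6 (d k : ℕ) (hd : 3 ≤ d) (hk : 1 ≤ k)
    (xmin x c S T π₀ : ℝ) (hxmin : 0 < xmin)
    (hx0 : 0 < x) (hxk : x ≤ ((k : ℝ) + 1) * xmin)
    (hc1 : xmin ≤ c) (hc2 : c ≤ x)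
    (hS0 : 0 ≤ S) (hS : S ≤ ((d : ℝ) - 1) * G d k * xmin)
    (hT : 0 ≤ T)
    (hπ : (d : ℝ) * G d k + 2 * (k : ℝ) - 1 ≤ π₀) :
    MonotoneOn (fun t : ℝ => (x + S + c * t) / (π₀ + T + t)) (Set.Ici (0 : ℝ)) := by
  have hd' : (3 : ℝ) ≤ (d : ℝ) := by exact_mod_cast hd
  have hk' : (1 : ℝ) ≤ (k : ℝ) := by exact_mod_cast hk
  have hdpow : (d : ℝ) ≤ (d : ℝ) ^ k := by
    calc (d : ℝ) = (d : ℝ) ^ 1 := (pow_one _).symm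
    _ ≤ (d : ℝ) ^ k := pow_le_pow_right₀ (by linarith) hk
  have hG : 1 ≤ G d k := by
    rw [G, le_div_iff₀ (by linarith)]
    linarith
  -- key: x + S ≤ c * (π₀ + T)
  have hkey : x + S ≤ c * (π₀ + T) := by
    have h1 : x + S ≤ xmin * (((k : ℝ) + 1) + ((d : ℝ) - 1) * G d k) := by
      nlinarith
    have h2 : ((k : ℝ) + 1) + ((d : ℝ) - 1) * G d k ≤ π₀ + T := by nlinarith
    have hE : (0 : ℝ) ≤ ((k : ℝ) + 1) + ((d : ℝ) - 1) * G d k := by nlinarith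
    calc x + S ≤ xmin * (((k : ℝ) + 1) + ((d : ℝ) - 1) * G d k) := h1
      _ ≤ c * (((k : ℝ) + 1) + ((d : ℝ) - 1) * G d k) :=
          mul_le_mul_of_nonneg_right hc1 hE
      _ ≤ c * (π₀ + T) := by
          apply mul_le_mul_of_nonneg_left h2 (by linarith)
  intro a ha b hb hab
  simp only [Set.mem_Ici] at ha hb
  have hda : 0 < π₀ + T + a := by nlinarith
  have hdb : 0 < π₀ + T + b := by nlinarith
  rw [div_le_div_iff₀ hda hdb]
  nlinarith [mul_nonneg (sub_nonneg.2 hab) (sub_nonneg.2 hkey)]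
end

section
/- For every real d ≥ 3 and every real k ≥ 1, the function y ↦ (d^y − 1)·(2k − 2y + 1) is strictly increasing on the closed interval [0, k − 1]. -/
/-- First step in the proof of Claim 3: for real `d ≥ 3` and `k ≥ 1`, the function
`y ↦ (d^y − 1)·(2k − 2y + 1)` is strictly increasing on `[0, k − 1]`. -/
theorem stmt_7 (d k : ℝ) (hd : 3 ≤ d) (hk : 1 ≤ k) :
    StrictMonoOn (fun y : ℝ => (d ^ y - 1) * (2 * k - 2 * y + 1)) (Set.Icc 0 (k - 1)) := by
  have hd0 : (0 : ℝ) < d := by linarith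
  have hderiv : ∀ y : ℝ, HasDerivAt (fun y : ℝ => (d ^ y - 1) * (2 * k - 2 * y + 1))
      (d ^ y * Real.log d * (2 * k - 2 * y + 1) + (d ^ y - 1) * (-2)) y := by
    intro y
    have h1 : HasDerivAt (fun y : ℝ => d ^ y - 1) (d ^ y * Real.log d) y :=
      ((Real.hasStrictDerivAt_const_rpow hd0 y).hasDerivAt).sub_const 1
    have h2 : HasDerivAt (fun y : ℝ => 2 * k - 2 * y + 1) (-2) y := by
      have : HasDerivAt (fun y : ℝ => 2 * k - 2 * y + 1) (0 - 2 * 1) y :=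
        (((hasDerivAt_const y (2 * k)).sub ((hasDerivAt_id y).const_mul 2)).add_const 1)
      simpa using this
    exact h1.mul h2
  apply strictMonoOn_of_hasDerivWithinAt_pos (convex_Icc _ _)
    (fun y _ => ((hderiv y).continuousAt).continuousWithinAt)
    (fun y hy => ((hderiv y).hasDerivWithinAt))
  intro y hy
  rw [interior_Icc] at hy
  have h1 : (1:ℝ) ≤ d ^ y := Real.one_le_rpow (by linarith) hy.1.le
  have hlog : 1 < Real.log d := by
    have h3 : (1:ℝ) < Real.log 3 := by
      rw [show (1:ℝ) = Real.log (Real.exp 1) by simp]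
      exact Real.log_lt_log (Real.exp_pos 1) (by
        have := Real.exp_one_lt_d9; linarith)
    calc (1:ℝ) < Real.log 3 := h3
    _ ≤ Real.log d := Real.log_le_log (by norm_num) hd
  have hT : (3:ℝ) < 2 * k - 2 * y + 1 := by linarith [hy.2]
  nlinarith [mul_pos (mul_pos (lt_of_lt_of_le one_pos h1) (lt_trans one_pos hlog)) (lt_trans (by norm_num : (0:ℝ)<3) hT), mul_lt_mul_of_pos_left hT (mul_pos (lt_of_lt_of_le one_pos h1) (lt_trans one_pos hlog)), mul_le_mul_of_nonneg_right hlog.le (by linarith : (0:ℝ) ≤ d ^ y)]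
end

section
/- For all integers d ≥ 3, k ≥ 2 and i with 1 ≤ i ≤ k − 1, one has (d^i − 1)·(2k − 2i + 1) < d^k − 1. -/
lemma aux_nat (d i : ℕ) (hd : 3 ≤ d) : ∀ j, 1 ≤ j → (d ^ i - 1) * (2 * j + 1) < d ^ (i + j) - 1 := by
  intro j hj
  induction j, hj using Nat.le_induction with
  | base =>
    have hdi : 1 ≤ d ^ i := Nat.one_le_pow _ _ (by omega)
    have : d ^ (i + 1) = d ^ i * d := by ring
    have h3 : d ^ i * 3 ≤ d ^ i * d := Nat.mul_le_mul_left _ hd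
    omega
  | succ j hj ih =>
    have hdi : 1 ≤ d ^ i := Nat.one_le_pow _ _ (by omega)
    have hdij : d ^ i ≤ d ^ (i + j) := Nat.pow_le_pow_right (by omega) (by omega)
    have hstep : d ^ (i + j) * 3 ≤ d ^ (i + j) * d := Nat.mul_le_mul_left _ hd
    have h2 : d ^ (i + (j + 1)) = d ^ (i + j) * d := by ring
    have : (d ^ i - 1) * (2 * (j + 1) + 1) = (d ^ i - 1) * (2 * j + 1) + 2 * (d ^ i - 1) := by ring
    omega

/-- Pointwise bound from the proof of Claim 3: for integers `d ≥ 3`, `k ≥ 2` and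
`1 ≤ i ≤ k − 1`, one has `(d^i − 1)·(2k − 2i + 1) < d^k − 1`. -/
theorem stmt_8 (d k i : ℕ) (hd : 3 ≤ d) (hk : 2 ≤ k) (hi1 : 1 ≤ i) (hik : i ≤ k - 1) :
    ((d : ℝ) ^ i - 1) * (2 * (k : ℝ) - 2 * (i : ℝ) + 1) < (d : ℝ) ^ k - 1 := by
  set j := k - i with hj
  have hk' : k = i + j := by omega
  have h := aux_nat d i hd j (by omega)
  have hdi : 1 ≤ d ^ i := Nat.one_le_pow _ _ (by omega)
  have hdk : 1 ≤ d ^ (i + j) := Nat.one_le_pow _ _ (by omega)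
  have hcast : ((d ^ i - 1) * (2 * j + 1) : ℝ) < ((d ^ (i + j) - 1 : ℕ) : ℝ) := by
    exact_mod_cast Nat.cast_lt.mpr h
  rw [hk']
  push_cast [hdi, hdk] at hcast ⊢
  have hjr : (2 : ℝ) * ((i:ℝ) + j) - 2 * i + 1 = 2 * j + 1 := by ring
  rw [hjr]; exact hcast
end

section
/- Let d ≥ 3 and k ≥ 2 be integers and let d_1, …, d_k be natural numbers with Σ_{i=1}^k d_i ≤ d and d_k ≤ d − 1. Then Σ_{i=1}^k d_i·G(i)·(2k − 2i + 1) < d·G(k), where G(m) = (d^m − 1)/(d − 1). -/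
/-!
Write `j = k - i`. Since `2j + 1 ≤ 3^j ≤ d^j` (Bernoulli), `G(i)·(2j + 1) ≤ (d^(i+j) - d^j)/(d - 1)
= G(i + j) - G(j)`, so every summand with `i < k` is at most `d_i·(G(k) - 1)`, while the summand
with `i = k` is `d_k·G(k)`. With `S = Σ_{i<k} d_i` the sum is at most
`(S + d_k)·G(k) - S ≤ d·G(k) - (d - S - d_k) - S = d·G(k) - (d - d_k) < d·G(k)`.
-/

lemma two_mul_add_one_le_pow {d : ℕ} (hd : 3 ≤ d) (j : ℕ) : 2 * (j : ℝ) + 1 ≤ (d : ℝ) ^ j := by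
  have hdR : (3 : ℝ) ≤ d := by exact_mod_cast hd
  calc 2 * (j : ℝ) + 1 = 1 + j * 2 := by ring
    _ ≤ (1 + 2) ^ j := one_add_mul_le_pow (by norm_num) j
    _ ≤ (d : ℝ) ^ j := pow_le_pow_left₀ (by norm_num) (by linarith) j

lemma one_le_G {d j : ℕ} (hd : 2 ≤ d) (hj : 1 ≤ j) : 1 ≤ G d j := by
  have hdR : (2 : ℝ) ≤ d := by exact_mod_cast hd
  have hpow : (d : ℝ) ≤ (d : ℝ) ^ j := le_self_pow₀ (by linarith) (by omega)
  rw [G, one_le_div (by linarith)]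
  linarith

lemma G_mul_two_mul_add_one_add_G_le {d : ℕ} (hd : 3 ≤ d) (i j : ℕ) :
    G d i * (2 * (j : ℝ) + 1) + G d j ≤ G d (i + j) := by
  have hdR : (3 : ℝ) ≤ d := by exact_mod_cast hd
  have hdi : (1 : ℝ) ≤ (d : ℝ) ^ i := one_le_pow₀ (by linarith)
  have hstep : ((d : ℝ) ^ i - 1) * (2 * (j : ℝ) + 1) ≤ ((d : ℝ) ^ i - 1) * (d : ℝ) ^ j :=
    mul_le_mul_of_nonneg_left (two_mul_add_one_le_pow hd j) (by linarith)
  rw [G, G, G, div_mul_eq_mul_div, ← add_div, div_le_div_iff_of_pos_right (by linarith),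
    pow_add]
  linarith

lemma G_mul_le_G_sub_one {d i k : ℕ} (hd : 3 ≤ d) (hik : i < k) :
    G d i * (2 * (k : ℝ) - 2 * (i : ℝ) + 1) ≤ G d k - 1 := by
  have h := G_mul_two_mul_add_one_add_G_le hd i (k - i)
  have hG := one_le_G (d := d) (j := k - i) (by omega) (by omega)
  rw [Nat.add_sub_cancel' hik.le, Nat.cast_sub hik.le] at h
  linarith

/-- Claim 3 of the paper (with `d_k ≤ d − 1` added for strictness):
`Σ_{i=1}^k d_i·G(i)·(2k − 2i + 1) < d·G(k)`. -/
theorem stmt_9 (d k : ℕ) (hd : 3 ≤ d) (hk : 2 ≤ k)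
    (dv : ℕ → ℕ) (hsum : ∑ i ∈ Finset.Icc 1 k, dv i ≤ d) (hdk : dv k ≤ d - 1) :
    ∑ i ∈ Finset.Icc 1 k, (dv i : ℝ) * G d i * (2 * (k : ℝ) - 2 * (i : ℝ) + 1)
      < (d : ℝ) * G d k := by
  have hk1 : 1 ≤ k := by omega
  rw [← Finset.Ico_insert_right hk1, Finset.sum_insert Finset.right_notMem_Ico] at hsum ⊢
  set S := ∑ i ∈ Finset.Ico 1 k, (dv i : ℝ)
  have hearly : ∑ i ∈ Finset.Ico 1 k, (dv i : ℝ) * G d i * (2 * (k : ℝ) - 2 * (i : ℝ) + 1)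
      ≤ S * (G d k - 1) := by
    rw [Finset.sum_mul]
    refine Finset.sum_le_sum fun i hi => ?_
    rw [mul_assoc]
    exact mul_le_mul_of_nonneg_left (G_mul_le_G_sub_one hd (Finset.mem_Ico.1 hi).2) (by positivity)
  have hS : dv k + S ≤ d := by
    simp only [S]
    exact_mod_cast hsum
  have hdk' : (dv k : ℝ) + 1 ≤ d := by exact_mod_cast (by omega : dv k + 1 ≤ d)
  have hG : 1 ≤ G d k := one_le_G (by omega) hk1
  rw [show 2 * (k : ℝ) - 2 * k + 1 = 1 by ring, mul_one]
  nlinarith [mul_nonneg (sub_nonneg.2 hS) (sub_nonneg.2 hG)]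
end

section
/- Let d ≥ 3 and k ≥ 1 be integers, let d_0, d_1, …, d_k be natural numbers with Σ_{j=0}^k d_j = d, and let l be an integer with 0 ≤ l ≤ k − 1 and d_l ≥ 1. Let x_min > 0 be a real, let x be a real with k·x_min ≤ x < (k+1)·x_min, and let π₀ be a real with π₀ ≥ d·G(k) + 2k − 1, where G(m) = (d^m − 1)/(d − 1) and G(0) = 0. Define Q = x + Σ_{j=1}^k d_j·G(j)·(x − (j−1)·x_min) and W = π₀ + 1 + Σ_{j=1}^k d_j·G(j). Then (Q + x·d^l − x_min·(l·G(l+1) − (l−1)·G(l))) / (W + d^l) > Q / W. -/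
open Finset

section GeometricSum

variable {d : ℕ}

lemma G_add (d m n : ℕ) : G d (m + n) = (d : ℝ) ^ m * G d n + G d m := by
  simp only [G, pow_add]
  ring

lemma G_nonneg (hd : 1 ≤ d) (n : ℕ) : 0 ≤ G d n := by
  have hd' : (1 : ℝ) ≤ d := by exact_mod_cast hd
  exact div_nonneg (sub_nonneg.2 (one_le_pow₀ hd')) (sub_nonneg.2 hd')

lemma sub_one_mul_G (hd : d ≠ 1) (n : ℕ) : ((d : ℝ) - 1) * G d n = (d : ℝ) ^ n - 1 :=
  mul_div_cancel₀ _ (sub_ne_zero.2 (by exact_mod_cast hd))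

lemma G_one (hd : d ≠ 1) : G d 1 = 1 := by
  rw [G, pow_one]
  exact div_self (sub_ne_zero.2 (by exact_mod_cast hd))

lemma G_succ (hd : d ≠ 1) (n : ℕ) : G d (n + 1) = G d n + (d : ℝ) ^ n := by
  rw [G_add, G_one hd, mul_one, add_comm]

lemma G_monotone (hd : 1 ≤ d) : Monotone (G d) :=
  monotone_nat_of_le_succ fun n => by
    rw [G_add]
    exact le_add_of_nonneg_left (mul_nonneg (by positivity) (G_nonneg hd 1))

lemma mul_G_lt_pow (hd : 2 ≤ d) {c : ℝ} (hc : c ≤ d - 1) (n : ℕ) :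
    c * G d n < (d : ℝ) ^ n := by
  have h := sub_one_mul_G (show d ≠ 1 by omega) n
  nlinarith [mul_le_mul_of_nonneg_right hc (G_nonneg (show 1 ≤ d by omega) n)]

lemma succ_mul_G_le_G_add (hd : 2 ≤ d) (m n : ℕ) : ((m : ℝ) + 1) * G d n ≤ G d (m + n) := by
  have hpow : (m : ℝ) + 1 ≤ (d : ℝ) ^ m := by
    have : m + 1 ≤ d ^ m := (Nat.lt_two_pow_self).trans_le (Nat.pow_le_pow_left hd m)
    exact_mod_cast this
  rw [G_add]
  nlinarith [G_nonneg (by omega : 1 ≤ d) n, G_nonneg (by omega : 1 ≤ d) m]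

end GeometricSum

section ShiftToNextLevel

variable {d : ℕ}

lemma neg_G_mul_G_succ_le (hd : 2 ≤ d) (l j : ℕ) :
    -(G d l * G d (l + 1)) ≤ G d j * (((j : ℝ) - (l + 1)) * (d : ℝ) ^ l - G d l) := by
  have hd1 : d ≠ 1 := by omega
  have hG := G_nonneg (show 1 ≤ d by omega)
  rcases lt_trichotomy j (l + 1) with hj | rfl | hj
  · obtain ⟨m, rfl⟩ : ∃ m, l = m + j := ⟨l - j, by omega⟩
    have hmul : ((m : ℝ) + 1) * G d j ≤ G d (m + j) := succ_mul_G_le_G_add hd m j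
    have hle : G d j ≤ G d (m + j) := G_monotone (by omega) (by omega)
    rw [G_succ hd1]
    push_cast
    nlinarith [mul_le_mul_of_nonneg_right hmul (pow_nonneg (Nat.cast_nonneg d) (m + j)),
      mul_le_mul_of_nonneg_right hle (hG (m + j))]
  · refine le_of_eq ?_
    push_cast
    ring
  · have hj' : (l : ℝ) + 2 ≤ j := by exact_mod_cast hj
    have hd' : (2 : ℝ) ≤ d := by exact_mod_cast hd
    have hlt : 1 * G d l < (d : ℝ) ^ l := mul_G_lt_pow hd (by linarith) l
    nlinarith [hG j, mul_nonneg (hG l) (hG (l + 1)),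
      mul_le_mul_of_nonneg_right hj' (pow_nonneg (Nat.cast_nonneg d) l)]

/-- Shifting one branch from level `l` to level `l + 1` adds `d ^ l` to `W` and
`x * d ^ l - xmin * shiftCost d l` to `Q`. -/
noncomputable def shiftCost (d l : ℕ) : ℝ := l * (d : ℝ) ^ l + G d l

lemma shiftCost_eq (hd : d ≠ 1) (l : ℕ) :
    (l : ℝ) * G d (l + 1) - ((l : ℝ) - 1) * G d l = shiftCost d l := by
  rw [G_succ hd, shiftCost]
  ring

lemma shiftCost_add_lt (hd : 3 ≤ d) {l : ℕ} {k π₀ : ℝ} (hk : (l : ℝ) + 1 ≤ k)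
    (hπ : d * G d (l + 1) + 2 * l + 1 ≤ π₀) :
    shiftCost d l + d * (G d l * G d (l + 1)) < π₀ * (k * (d : ℝ) ^ l - shiftCost d l) := by
  have hG := G_nonneg (show 1 ≤ d by omega)
  have hd' : (3 : ℝ) ≤ d := by exact_mod_cast hd
  have hpow : (0 : ℝ) ≤ (d : ℝ) ^ l := by positivity
  have hlt₁ : 1 * G d l < (d : ℝ) ^ l := mul_G_lt_pow (by omega) (by linarith) l
  have hlt₂ : 2 * G d l < (d : ℝ) ^ l := mul_G_lt_pow (by omega) (by linarith) l
  have hpos : 0 < (d * G d (l + 1) + l + 1) * ((d : ℝ) ^ l - 2 * G d l) := by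
    have := hG (l + 1)
    have : (0 : ℝ) ≤ l := Nat.cast_nonneg l
    apply mul_pos <;> nlinarith
  have hk' : (d : ℝ) ^ l - G d l ≤ k * (d : ℝ) ^ l - shiftCost d l := by
    rw [shiftCost]
    nlinarith
  calc shiftCost d l + d * (G d l * G d (l + 1))
      < shiftCost d l + d * (G d l * G d (l + 1)) +
          (d * G d (l + 1) + l + 1) * ((d : ℝ) ^ l - 2 * G d l) := lt_add_of_pos_right _ hpos
    _ = (d * G d (l + 1) + 2 * l + 1) * ((d : ℝ) ^ l - G d l) := by rw [shiftCost]; ring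
    _ ≤ π₀ * ((d : ℝ) ^ l - G d l) := mul_le_mul_of_nonneg_right hπ (by linarith)
    _ ≤ π₀ * (k * (d : ℝ) ^ l - shiftCost d l) :=
        mul_le_mul_of_nonneg_left hk' (by nlinarith [hG (l + 1)])

lemma pow_mul_sum_le (hd : 2 ≤ d) (l : ℕ) (s : Finset ℕ) (w : ℕ → ℝ)
    (hw : ∀ j ∈ s, 0 ≤ w j) {c : ℝ} (hc : ∑ j ∈ s, w j ≤ c) (x : ℝ) {xmin : ℝ}
    (hxmin : 0 ≤ xmin) :
    (d : ℝ) ^ l * ∑ j ∈ s, w j * G d j * (x - ((j : ℝ) - 1) * xmin) ≤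
      (x * (d : ℝ) ^ l - xmin * shiftCost d l) * ∑ j ∈ s, w j * G d j +
        xmin * c * (G d l * G d (l + 1)) := by
  have hG := G_nonneg (show 1 ≤ d by omega)
  have hcw :
      xmin * (∑ j ∈ s, w j) * (G d l * G d (l + 1)) ≤ xmin * c * (G d l * G d (l + 1)) :=
    mul_le_mul_of_nonneg_right (mul_le_mul_of_nonneg_left hc hxmin) (mul_nonneg (hG l) (hG _))
  refine le_trans ?_ (add_le_add_right hcw _)
  simp only [mul_sum, sum_mul, ← sum_add_distrib]
  refine sum_le_sum fun j hj => ?_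
  have := mul_le_mul_of_nonneg_left (neg_G_mul_G_succ_le hd l j) (mul_nonneg hxmin (hw j hj))
  rw [shiftCost]
  linarith

end ShiftToNextLevel

lemma div_lt_add_div_add_iff {α : Type*} [Field α] [LinearOrder α] [IsStrictOrderedRing α]
    {a b c e : α} (hb : 0 < b) (he : 0 < e) :
    a / b < (a + c) / (b + e) ↔ a * e < c * b := by
  rw [div_lt_div_iff₀ hb (add_pos hb he)]
  constructor <;> intro h <;> linarith

theorem stmt_11_general (d k : ℕ) (hd : 3 ≤ d) (hk : 1 ≤ k)
    (dv : ℕ → ℕ) (hsum : ∑ j ∈ Finset.range (k + 1), dv j = d)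
    (l : ℕ) (hl : l ≤ k - 1)
    (xmin x π₀ : ℝ) (hxmin : 0 < xmin)
    (hx1 : (k : ℝ) * xmin ≤ x)
    (hπ : (d : ℝ) * G d k + 2 * (k : ℝ) - 1 ≤ π₀) :
    ((x + ∑ j ∈ Finset.Icc 1 k, (dv j : ℝ) * G d j * (x - ((j : ℝ) - 1) * xmin))
        + x * (d : ℝ) ^ l - xmin * ((l : ℝ) * G d (l + 1) - ((l : ℝ) - 1) * G d l)) /
      ((π₀ + 1 + ∑ j ∈ Finset.Icc 1 k, (dv j : ℝ) * G d j) + (d : ℝ) ^ l)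
    > (x + ∑ j ∈ Finset.Icc 1 k, (dv j : ℝ) * G d j * (x - ((j : ℝ) - 1) * xmin)) /
      (π₀ + 1 + ∑ j ∈ Finset.Icc 1 k, (dv j : ℝ) * G d j) := by
  have hlk : l + 1 ≤ k := by omega
  have hG := G_nonneg (show 1 ≤ d by omega)
  set S := ∑ j ∈ Icc 1 k, (dv j : ℝ) * G d j
  have hπ' : d * G d (l + 1) + 2 * l + 1 ≤ π₀ := by
    have : G d (l + 1) ≤ G d k := G_monotone (by omega) hlk
    have : (l : ℝ) + 1 ≤ k := by exact_mod_cast hlk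
    nlinarith
  have hdv : ∑ j ∈ Icc 1 k, (dv j : ℝ) ≤ d := by
    rw [← hsum]
    exact_mod_cast sum_le_sum_of_subset fun j hj => by
      simp only [mem_Icc, mem_range] at hj ⊢; omega
  have hcross := pow_mul_sum_le (show 2 ≤ d by omega) l (Icc 1 k) (fun j => dv j)
    (fun j _ => by positivity) hdv x hxmin.le
  have hcost := shiftCost_add_lt hd (k := k) (by exact_mod_cast hlk) hπ'
  have hπ₀ : 0 ≤ π₀ := by nlinarith [hG (l + 1)]
  have hW : 0 < π₀ + 1 + S := by
    have : 0 ≤ S := sum_nonneg fun j _ => mul_nonneg (Nat.cast_nonneg _) (hG j)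
    linarith
  rw [shiftCost_eq (by omega), add_sub_assoc, gt_iff_lt, div_lt_add_div_add_iff hW (by positivity)]
  have hx : k * xmin * (π₀ * (d : ℝ) ^ l) ≤ x * (π₀ * (d : ℝ) ^ l) :=
    mul_le_mul_of_nonneg_right hx1 (by positivity)
  linarith [mul_lt_mul_of_pos_left hcost hxmin]

/-- Lemma 3 of the paper: moving a unit of propagation from level `l` to level `l + 1`
strictly increases the root's utility `Q / W`. -/
theorem stmt_11 (d k : ℕ) (hd : 3 ≤ d) (hk : 1 ≤ k)
    (dv : ℕ → ℕ) (hsum : ∑ j ∈ Finset.range (k + 1), dv j = d)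
    (l : ℕ) (hl : l ≤ k - 1) (hdl : 1 ≤ dv l)
    (xmin x π₀ : ℝ) (hxmin : 0 < xmin)
    (hx1 : (k : ℝ) * xmin ≤ x) (hx2 : x < ((k : ℝ) + 1) * xmin)
    (hπ : (d : ℝ) * G d k + 2 * (k : ℝ) - 1 ≤ π₀) :
    ((x + ∑ j ∈ Finset.Icc 1 k, (dv j : ℝ) * G d j * (x - ((j : ℝ) - 1) * xmin))
        + x * (d : ℝ) ^ l - xmin * ((l : ℝ) * G d (l + 1) - ((l : ℝ) - 1) * G d l)) /
      ((π₀ + 1 + ∑ j ∈ Finset.Icc 1 k, (dv j : ℝ) * G d j) + (d : ℝ) ^ l)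
    > (x + ∑ j ∈ Finset.Icc 1 k, (dv j : ℝ) * G d j * (x - ((j : ℝ) - 1) * xmin)) /
      (π₀ + 1 + ∑ j ∈ Finset.Icc 1 k, (dv j : ℝ) * G d j) :=
  stmt_11_general d k hd hk dv hsum l hl xmin x π₀ hxmin hx1 hπ
end

section
/- Let 𝒢 be a simple graph, let s be a vertex, and let j be a vertex with j ≠ s that is reachable from s. If i₁ and i₂ are vertices each adjacent to j such that every walk from s to j whose length equals the graph distance dist(s, j) contains i₁ and also contains i₂, then i₁ = i₂. -/
open SimpleGraph

private lemma aux_bf {V : Type*} (𝒢 : SimpleGraph V) (s j i : V)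
    (hadj : 𝒢.Adj i j) (p : 𝒢.Walk s j) (hp : p.length = 𝒢.dist s j)
    (hi : i ∈ p.support) : i = p.getVert (p.length - 1) := by
  classical
  have hspec := p.take_spec hi
  set t := p.takeUntil i hi with ht
  set d := p.dropUntil i hi with hd
  have hlen : t.length + d.length = p.length := by
    rw [← hspec, Walk.length_append]
  have hij : i ≠ j := hadj.ne
  have hd1 : 1 ≤ d.length := by
    by_contra h
    push_neg at h
    interval_cases hdl : d.length
    exact absurd (Walk.eq_of_length_eq_zero hdl) hij
  have hq : 𝒢.dist s j ≤ t.length + 1 := by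
    have := 𝒢.dist_le (t.append hadj.toWalk)
    simpa [Walk.length_append] using this
  have hd1' : d.length = 1 := by omega
  have htlen : t.length = p.length - 1 := by omega
  have : p.getVert (p.length - 1) = d.getVert 0 := by
    conv_lhs => rw [← hspec]
    rw [Walk.getVert_append, Walk.length_append, if_neg (by omega)]
    congr 1
    omega
  simp [this]

/-- Each player has at most one best friend: if `i₁` and `i₂` are both adjacent to `j`
and every shortest walk from `s` to `j` contains both, then `i₁ = i₂`. -/
theorem stmt_15 {V : Type*} (𝒢 : SimpleGraph V) (s j : V) (hj : j ≠ s)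
    (hreach : 𝒢.Reachable s j) (i₁ i₂ : V)
    (hadj₁ : 𝒢.Adj i₁ j) (hadj₂ : 𝒢.Adj i₂ j)
    (hbest₁ : ∀ p : 𝒢.Walk s j, p.length = 𝒢.dist s j → i₁ ∈ p.support)
    (hbest₂ : ∀ p : 𝒢.Walk s j, p.length = 𝒢.dist s j → i₂ ∈ p.support) :
    i₁ = i₂ := by
  obtain ⟨p, hp⟩ := hreach.exists_walk_length_eq_dist
  have h1 := aux_bf 𝒢 s j i₁ hadj₁ p hp (hbest₁ p hp)
  have h2 := aux_bf 𝒢 s j i₂ hadj₂ p hp (hbest₂ p hp)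
  rw [h1, h2]
end
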